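/- arXiv:2304.02975 — 2 statements merged into one kernel-verified Lean document; each statement's English description precedes it below -/
import Mathlib

section
/- Consider a single LSTM layer with n_c units and input dimension n_u: given state (c,h) ∈ ℝ^{n_c}×ℝ^{n_c} and input u ∈ ℝ^{n_u}, the updated state is c⁺ = f∘c + i∘r and h⁺ = z∘φ(c⁺), where f = σ(W_f u + U_f h + b_f), i = σ(W_i u + U_i h + b_i), z = σ(W_z u + U_z h + b_z), r = φ(W_r u + U_r h + b_r). Define σ̄_f = σ(M_f), σ̄_i = σ(M_i), φ̄_r = tanh(M_r), where M_* is the maximum over rows of the ℓ¹ norm of the concatenated row of [W_* U_* b_*], and set c̄ = σ̄_i φ̄_r/(1−σ̄_f) and h̄ = tanh(c̄). Then for every input u with ‖u‖∞ ≤ 1 and every state with ‖c‖∞ ≤ c̄ and ‖h‖∞ ≤ h̄, the updated state satisfies ‖c⁺‖∞ ≤ c̄ and ‖h⁺‖∞ ≤ h̄. -/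
/-- The sigmoid activation function `σ(x) = 1/(1+e^{-x})`. -/
noncomputable def sigm (x : ℝ) : ℝ := 1 / (1 + Real.exp (-x))

/-- The maximum over rows of the ℓ¹ norm of the rows of the augmented matrix `[W U b]`. -/
noncomputable def augRowMax {n m p : ℕ} (W : Matrix (Fin n) (Fin m) ℝ)
    (U : Matrix (Fin n) (Fin p) ℝ) (b : Fin n → ℝ) : ℝ :=
  ⨆ j, (∑ i, |W j i| + ∑ i, |U j i| + |b j|)

/-!
Since `‖u‖∞ ≤ 1` and `‖h‖∞ ≤ h̄ < 1`, each gate pre-activation `(W u + U h + b)_j` is bounded in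
absolute value by the ℓ¹ norm of the `j`-th row of `[W U b]`, hence by `M_*`. Monotonicity of `σ`
and `tanh` gives `0 < f ≤ σ̄_f`, `0 < i ≤ σ̄_i`, `|r| ≤ φ̄_r` and `0 < z < 1`. Then
`|c⁺| ≤ σ̄_f c̄ + σ̄_i φ̄_r = c̄`, because `c̄` is the fixed point of `x ↦ σ̄_f x + σ̄_i φ̄_r`, and
`|h⁺| ≤ |tanh c⁺| = tanh |c⁺| ≤ tanh c̄`.
-/

open Real

lemma sigm_eq_sigmoid : sigm = sigmoid := funext fun _ ↦ one_div _

lemma sigm_pos (x : ℝ) : 0 < sigm x := sigm_eq_sigmoid ▸ sigmoid_pos x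

lemma sigm_lt_one (x : ℝ) : sigm x < 1 := sigm_eq_sigmoid ▸ sigmoid_lt_one x

lemma abs_sigm_le {x a : ℝ} (hx : |x| ≤ a) : |sigm x| ≤ sigm a := by
  rw [sigm_eq_sigmoid, abs_of_pos (sigmoid_pos x)]
  exact sigmoid_le ((le_abs_self x).trans hx)

namespace Real

lemma tanh_strictMono : StrictMono tanh := fun a b hab ↦ by
  by_contra! hba
  have := artanh_le_artanh (neg_one_lt_tanh b) (tanh_lt_one a) hba
  rw [artanh_tanh, artanh_tanh] at this
  exact this.not_gt hab

lemma tanh_nonneg {x : ℝ} (hx : 0 ≤ x) : 0 ≤ tanh x :=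
  tanh_zero ▸ tanh_strictMono.monotone hx

lemma abs_tanh (x : ℝ) : |tanh x| = tanh |x| := by
  rcases le_total 0 x with hx | hx
  · rw [abs_of_nonneg hx, abs_of_nonneg (tanh_nonneg hx)]
  · rw [abs_of_nonpos hx, tanh_neg, abs_of_nonpos (tanh_zero ▸ tanh_strictMono.monotone hx)]

lemma abs_tanh_le {x a : ℝ} (hx : |x| ≤ a) : |tanh x| ≤ tanh a :=
  (abs_tanh x).trans_le (tanh_strictMono.monotone hx)

lemma abs_mul_tanh_le {z x a : ℝ} (hz : |z| ≤ 1) (hx : |x| ≤ a) : |z * tanh x| ≤ tanh a :=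
  calc |z * tanh x| = |z| * |tanh x| := abs_mul z (tanh x)
    _ ≤ 1 * tanh a := mul_le_mul hz (abs_tanh_le hx) (abs_nonneg _) zero_le_one
    _ = tanh a := one_mul _

end Real

lemma abs_mulVec_apply_le {m n : Type*} [Fintype n] (A : Matrix m n ℝ) (v : n → ℝ) (j : m) :
    |A.mulVec v j| ≤ (∑ i, |A j i|) * ‖v‖ :=
  calc |∑ i, A j i * v i| ≤ ∑ i, |A j i * v i| := Finset.abs_sum_le_sum_abs _ _
    _ ≤ ∑ i, |A j i| * ‖v‖ := Finset.sum_le_sum fun i _ ↦ by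
        rw [abs_mul]; exact mul_le_mul_of_nonneg_left (norm_le_pi_norm v i) (abs_nonneg _)
    _ = (∑ i, |A j i|) * ‖v‖ := (Finset.sum_mul _ _ _).symm

lemma augRowMax_nonneg {n m p : ℕ} (W : Matrix (Fin n) (Fin m) ℝ)
    (U : Matrix (Fin n) (Fin p) ℝ) (b : Fin n → ℝ) : 0 ≤ augRowMax W U b :=
  iSup_nonneg fun _ ↦ by positivity

lemma abs_mulVec_add_mulVec_add_le_augRowMax {n m p : ℕ} (W : Matrix (Fin n) (Fin m) ℝ)
    (U : Matrix (Fin n) (Fin p) ℝ) (b : Fin n → ℝ) {u : Fin m → ℝ} {h : Fin p → ℝ}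
    (hu : ‖u‖ ≤ 1) (hh : ‖h‖ ≤ 1) (j : Fin n) :
    |(W.mulVec u + U.mulVec h + b) j| ≤ augRowMax W U b := by
  have hWu := (abs_mulVec_apply_le W u j).trans
    (mul_le_of_le_one_right (by positivity) hu)
  have hUh := (abs_mulVec_apply_le U h j).trans
    (mul_le_of_le_one_right (by positivity) hh)
  calc |(W.mulVec u + U.mulVec h + b) j|
      ≤ |W.mulVec u j| + |U.mulVec h j| + |b j| := abs_add_three _ _ _
    _ ≤ ∑ i, |W j i| + ∑ i, |U j i| + |b j| := by gcongr
    _ ≤ augRowMax W U b := le_ciSup (f := fun j ↦ ∑ i, |W j i| + ∑ i, |U j i| + |b j|)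
        (Finite.bddAbove_range _) j

lemma abs_mul_add_mul_le {f c i r σf σi φr cbar : ℝ} (hf : |f| ≤ σf) (hc : |c| ≤ cbar)
    (hi : |i| ≤ σi) (hr : |r| ≤ φr) : |f * c + i * r| ≤ σf * cbar + σi * φr :=
  calc |f * c + i * r| ≤ |f| * |c| + |i| * |r| := by
        simpa only [abs_mul] using abs_add_le (f * c) (i * r)
    _ ≤ σf * cbar + σi * φr := by
        gcongr
        · exact (abs_nonneg f).trans hf
        · exact (abs_nonneg i).trans hi

/-- Invariant set of a single LSTM layer: if `‖u‖∞ ≤ 1`, `‖c‖∞ ≤ c̄` and `‖h‖∞ ≤ h̄`,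
with `c̄ = σ̄_i φ̄_r / (1 - σ̄_f)` and `h̄ = tanh c̄`, then the updated state
`c⁺ = f∘c + i∘r`, `h⁺ = z∘tanh(c⁺)` satisfies `‖c⁺‖∞ ≤ c̄` and `‖h⁺‖∞ ≤ h̄`. -/
theorem stmt_4 {nc nu : ℕ}
    (Wf Wi Wz Wr : Matrix (Fin nc) (Fin nu) ℝ)
    (Uf Ui Uz Ur : Matrix (Fin nc) (Fin nc) ℝ)
    (bf bi bz br : Fin nc → ℝ)
    (σf σi φr cbar hbar : ℝ)
    (hσf : σf = sigm (augRowMax Wf Uf bf))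
    (hσi : σi = sigm (augRowMax Wi Ui bi))
    (hφr : φr = Real.tanh (augRowMax Wr Ur br))
    (hcbar : cbar = σi * φr / (1 - σf))
    (hhbar : hbar = Real.tanh cbar)
    (u : Fin nu → ℝ) (hu : ‖u‖ ≤ 1)
    (c h : Fin nc → ℝ) (hc : ‖c‖ ≤ cbar) (hh : ‖h‖ ≤ hbar)
    (f i z r cplus hplus : Fin nc → ℝ)
    (hf : f = fun j => sigm ((Wf.mulVec u + Uf.mulVec h + bf) j))
    (hi : i = fun j => sigm ((Wi.mulVec u + Ui.mulVec h + bi) j))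
    (hz : z = fun j => sigm ((Wz.mulVec u + Uz.mulVec h + bz) j))
    (hr : r = fun j => Real.tanh ((Wr.mulVec u + Ur.mulVec h + br) j))
    (hcplus : cplus = fun j => f j * c j + i j * r j)
    (hhplus : hplus = fun j => z j * Real.tanh (cplus j)) :
    ‖cplus‖ ≤ cbar ∧ ‖hplus‖ ≤ hbar := by
  have hh1 : ‖h‖ ≤ 1 := hh.trans (hhbar ▸ (tanh_lt_one cbar).le)
  have gate (W : Matrix (Fin nc) (Fin nu) ℝ) (U : Matrix (Fin nc) (Fin nc) ℝ) b :=
    abs_mulVec_add_mulVec_add_le_augRowMax W U b hu hh1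
  have hσf1 : σf < 1 := hσf ▸ sigm_lt_one _
  have hcbar0 : 0 ≤ cbar := hcbar ▸ div_nonneg (mul_nonneg (hσi ▸ (sigm_pos _).le)
    (hφr ▸ tanh_nonneg (augRowMax_nonneg _ _ _))) (sub_nonneg.2 hσf1.le)
  have hfix : σf * cbar + σi * φr = cbar := by
    rw [hcbar]; field_simp [(sub_pos.2 hσf1).ne']; ring
  have hcplus_le (j : Fin nc) : |cplus j| ≤ cbar := by
    rw [hcplus, ← hfix]
    refine abs_mul_add_mul_le ?_ ((norm_le_pi_norm c j).trans hc) ?_ ?_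
    · rw [hf, hσf]; exact abs_sigm_le (gate Wf Uf bf j)
    · rw [hi, hσi]; exact abs_sigm_le (gate Wi Ui bi j)
    · rw [hr, hφr]; exact abs_tanh_le (gate Wr Ur br j)
  refine ⟨(pi_norm_le_iff_of_nonneg hcbar0).2 hcplus_le,
    (pi_norm_le_iff_of_nonneg (hhbar ▸ tanh_nonneg hcbar0)).2 fun j ↦ ?_⟩
  rw [hhplus, hz, hhbar]
  exact abs_mul_tanh_le ((abs_of_pos (sigm_pos _)).trans_le (sigm_lt_one _).le) (hcplus_le j)
end

section
/- Let a, z ∈ (0,1) and α, q ≥ 0 be real numbers, and let M be the real 2×2 matrix with rows (a, α) and (z·a, z·α + q). If a + z·α + q − a·q < 1 and a·q < 1, then every complex eigenvalue of M has modulus strictly less than 1 (M is Schur stable). -/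
/-!
The characteristic polynomial of the matrix is `X² - tX + d` with trace `t = a + zα + q ≥ 0`
and determinant `d = aq`, so the hypotheses are Jury's stability conditions `d < 1`,
`|t| < 1 + d` for a real monic quadratic. Under them a non-real root `μ` has
`|μ|² = μ·μ̄ = d < 1`, while a real root cannot lie outside `(-1, 1)` because the
polynomial is positive at `±1` and its vertex `t/2` lies in `(-1, 1)`.
-/

open Polynomial

theorem Complex.norm_lt_one_of_sq_sub_mul_add_eq_zero {t d : ℝ} (hd : d < 1) (ht : |t| < 1 + d)
    {μ : ℂ} (hμ : μ ^ 2 - t * μ + d = 0) : ‖μ‖ < 1 := by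
  obtain ⟨x, y⟩ := μ
  have hre : x ^ 2 - y ^ 2 - t * x + d = 0 := by
    simpa [sq] using congrArg Complex.re hμ
  have him : y * (2 * x - t) = 0 := by
    have := congrArg Complex.im hμ
    simp only [sq, add_im, sub_im, mul_im, ofReal_re, ofReal_im, zero_mul, add_zero,
      zero_im] at this
    linarith
  rw [← sq_lt_one_iff₀ (norm_nonneg _), Complex.sq_norm, Complex.normSq_mk]
  obtain ⟨ht₁, ht₂⟩ := abs_lt.mp ht
  rcases mul_eq_zero.mp him with rfl | hx
  · -- `x² - tx + d = (x - 1)(x + 1 - t) + (1 - t + d) = (x + 1)(x - 1 - t) + (1 + t + d)`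
    -- is positive for `x ≥ 1` and for `x ≤ -1`
    have : |x| < 1 := by
      by_contra! h
      rcases le_abs'.mp h with h | h
      · nlinarith [mul_nonneg (by linarith : 0 ≤ -(x + 1)) (by linarith : 0 ≤ -(x - 1 - t))]
      · nlinarith [mul_nonneg (by linarith : 0 ≤ x - 1) (by linarith : 0 ≤ x + 1 - t)]
    nlinarith [abs_mul_abs_self x, abs_nonneg x]
  · nlinarith

theorem stmt_12_general (a z α q : ℝ)
    (ha0 : 0 < a) (hz0 : 0 < z)
    (hα : 0 ≤ α) (hq : 0 ≤ q)
    (h1 : a + z * α + q - a * q < 1) (h2 : a * q < 1) :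
    ∀ μ : ℂ,
      (Matrix.charpoly ((!![a, α; z * a, z * α + q]).map (Complex.ofReal))).IsRoot μ →
        ‖μ‖ < 1 := by
  intro μ hμ
  have hcharpoly : ((!![a, α; z * a, z * α + q]).map Complex.ofReal).charpoly =
      X ^ 2 - C ((a + z * α + q : ℝ) : ℂ) * X + C ((a * q : ℝ) : ℂ) := by
    rw [Matrix.charpoly_fin_two, Matrix.trace_fin_two, Matrix.det_fin_two]
    simp only [Matrix.map_apply, Matrix.of_apply, Matrix.cons_val', Matrix.cons_val_zero,
      Matrix.cons_val_fin_one, Matrix.cons_val_one, Complex.ofReal_add, Complex.ofReal_mul,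
      map_add, map_mul, map_sub]
    ring
  rw [hcharpoly, IsRoot.def] at hμ
  simp only [eval_add, eval_sub, eval_mul, eval_pow, eval_C, eval_X] at hμ
  refine Complex.norm_lt_one_of_sq_sub_mul_add_eq_zero h2 ?_ hμ
  rw [abs_of_nonneg (by positivity)]
  linarith

/-- Schur stability of the comparison matrix of an LSTM layer: for `a, z ∈ (0,1)` and
`α, q ≥ 0`, if `a + z·α + q − a·q < 1` and `a·q < 1`, then all complex eigenvalues of
the matrix `[[a, α], [z·a, z·α + q]]` have modulus strictly less than 1. -/
theorem stmt_12 (a z α q : ℝ)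
    (ha0 : 0 < a) (ha1 : a < 1) (hz0 : 0 < z) (hz1 : z < 1)
    (hα : 0 ≤ α) (hq : 0 ≤ q)
    (h1 : a + z * α + q - a * q < 1) (h2 : a * q < 1) :
    ∀ μ : ℂ,
      (Matrix.charpoly ((!![a, α; z * a, z * α + q]).map (Complex.ofReal))).IsRoot μ →
        ‖μ‖ < 1 :=
  stmt_12_general a z α q ha0 hz0 hα hq h1 h2
end
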